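/- Let α be a smooth 1-form on ℝ^N and Γ : [a,b] × (−ε, ε) → ℝ^N a smooth variation; write γ_s(t) = Γ(t,s), γ = γ₀, and δγ(t) = ∂Γ/∂s(t,0). Then d/ds |_{s=0} ∫_a^b α(γ_s(t))(γ̇_s(t)) dt = ∫_a^b dα(γ(t))(δγ(t), γ̇(t)) dt + α(γ(b))(δγ(b)) − α(γ(a))(δγ(a)). -/

import Mathlib

/-! The integrand is the pullback form `Γ^*α` on the `(t, s)`-plane evaluated on `∂ₜ`.
Differentiating under the integral sign gives `∫ ∂ₛ ((Γ^*α)(∂ₜ)) dt`. Since the second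
derivatives of `Γ` are symmetric, `∂ₛ ((Γ^*α)(∂ₜ)) - ∂ₜ ((Γ^*α)(∂ₛ)) = dα(Γ)(∂ₛΓ, ∂ₜΓ)`
(the exterior derivative commutes with pullback), and `∫ ∂ₜ ((Γ^*α)(∂ₛ)) dt` yields the
boundary terms by the fundamental theorem of calculus. -/
noncomputable section
open scoped ContDiff

/-- The Lie derivative of a 1-form `α` on `ℝ^N` along a vector field `ζ`:
`(L_ζ α)(x)(v) = (Dα(x)(ζ(x)))(v) + α(x)(Dζ(x)(v))`. -/
def lieDerivV {N : ℕ} (ζ : (Fin N → ℝ) → (Fin N → ℝ))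
    (α : (Fin N → ℝ) → ((Fin N → ℝ) →L[ℝ] ℝ)) (x : Fin N → ℝ) :
    (Fin N → ℝ) →L[ℝ] ℝ :=
  fderiv ℝ α x (ζ x) + (α x).comp (fderiv ℝ ζ x)

/-- The exterior derivative of a 1-form on `ℝ^N`:
`dα(x)(u,v) = (Dα(x)u)(v) − (Dα(x)v)(u)`. -/
def extDerivV {N : ℕ} (α : (Fin N → ℝ) → ((Fin N → ℝ) →L[ℝ] ℝ)) (x u v : Fin N → ℝ) : ℝ :=
  fderiv ℝ α x u v - fderiv ℝ α x v u

section PartialDerivatives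

variable {E : Type*} [NormedAddCommGroup E] [NormedSpace ℝ E] {φ : ℝ × ℝ → E}
  {φ' : ℝ × ℝ →L[ℝ] E} {t s : ℝ}

theorem HasFDerivAt.hasDerivAt_partial_fst (h : HasFDerivAt φ φ' (t, s)) :
    HasDerivAt (fun u => φ (u, s)) (φ' (1, 0)) t :=
  h.comp_hasDerivAt t ((hasDerivAt_id t).prodMk (hasDerivAt_const t s))

theorem HasFDerivAt.hasDerivAt_partial_snd (h : HasFDerivAt φ φ' (t, s)) :
    HasDerivAt (fun u => φ (t, u)) (φ' (0, 1)) s :=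
  h.comp_hasDerivAt s ((hasDerivAt_const s t).prodMk (hasDerivAt_id s))

theorem hasDerivAt_intervalIntegral_of_contDiff (hφ : ContDiff ℝ 1 φ) (a b s₀ : ℝ) :
    HasDerivAt (fun s => ∫ t in a..b, φ (t, s)) (∫ t in a..b, fderiv ℝ φ (t, s₀) (0, 1)) s₀ := by
  have hφ' : Continuous fun p => fderiv ℝ φ p (0, 1) :=
    (hφ.continuous_fderiv one_ne_zero).clm_apply continuous_const
  obtain ⟨C, hC⟩ : ∃ C, ∀ p ∈ Set.uIcc a b ×ˢ Metric.closedBall s₀ 1, ‖fderiv ℝ φ p (0, 1)‖ ≤ C :=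
    (isCompact_uIcc.prod (isCompact_closedBall s₀ 1)).exists_bound_of_continuousOn
      hφ'.continuousOn
  have hslice : ∀ s, Continuous fun t => φ (t, s) :=
    fun s => hφ.continuous.comp (continuous_id.prodMk continuous_const)
  refine (intervalIntegral.hasDerivAt_integral_of_dominated_loc_of_deriv_le (bound := fun _ => C)
    (Metric.closedBall_mem_nhds s₀ one_pos) (.of_forall fun s => (hslice s).aestronglyMeasurable)
    ((hslice s₀).intervalIntegrable a b)
    (hφ'.comp (continuous_id.prodMk continuous_const)).aestronglyMeasurable
    (.of_forall fun t ht s hs => hC (t, s) ⟨Set.uIoc_subset_uIcc ht, hs⟩)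
    intervalIntegrable_const
    (.of_forall fun t _ s _ => ?_)).2
  exact ((hφ.differentiable one_ne_zero) (t, s)).hasFDerivAt.hasDerivAt_partial_snd

theorem integral_fderiv_apply_fst [CompleteSpace E] (hφ : ContDiff ℝ 1 φ) (a b s : ℝ) :
    ∫ t in a..b, fderiv ℝ φ (t, s) (1, 0) = φ (b, s) - φ (a, s) := by
  have hcont : Continuous fun t => fderiv ℝ φ (t, s) (1, 0) :=
    ((hφ.continuous_fderiv one_ne_zero).comp (continuous_id.prodMk continuous_const)).clm_apply
      continuous_const
  exact intervalIntegral.integral_eq_sub_of_hasDerivAt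
    (fun t _ => ((hφ.differentiable one_ne_zero) (t, s)).hasFDerivAt.hasDerivAt_partial_fst)
    (hcont.intervalIntegrable a b)

theorem hasDerivAt_intervalIntegral_form_apply_fst [CompleteSpace E]
    {η : ℝ × ℝ → (ℝ × ℝ →L[ℝ] E)} (hη : ContDiff ℝ 1 η) (a b s : ℝ) :
    HasDerivAt (fun s => ∫ t in a..b, η (t, s) (1, 0))
      ((∫ t in a..b, (fderiv ℝ η (t, s) (0, 1) (1, 0) - fderiv ℝ η (t, s) (1, 0) (0, 1)))
        + η (b, s) (0, 1) - η (a, s) (0, 1)) s := by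
  have happly : ∀ v, ContDiff ℝ 1 fun p => η p v := fun v => hη.clm_apply contDiff_const
  have hfderiv_apply : ∀ v w p, fderiv ℝ (fun p => η p v) p w = fderiv ℝ η p w v := by
    intro v w p
    rw [fderiv_clm_apply ((hη.differentiable one_ne_zero) p) (differentiableAt_const v)]
    simp
  have hcont : ∀ v w, Continuous fun t => fderiv ℝ η (t, s) w v := fun v w =>
    (((hη.continuous_fderiv one_ne_zero).comp (continuous_id.prodMk continuous_const)).clm_apply
      continuous_const).clm_apply continuous_const
  have hFTC := integral_fderiv_apply_fst (happly (0, 1)) a b s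
  have hLeibniz := hasDerivAt_intervalIntegral_of_contDiff (happly (1, 0)) a b s
  simp only [hfderiv_apply] at hFTC hLeibniz
  convert hLeibniz using 1
  rw [intervalIntegral.integral_sub ((hcont _ _).intervalIntegrable a b)
    ((hcont _ _).intervalIntegrable a b), hFTC]
  abel

end PartialDerivatives

section Pullback

variable {U E F : Type*} [NormedAddCommGroup U] [NormedSpace ℝ U] [NormedAddCommGroup E]
  [NormedSpace ℝ E] [NormedAddCommGroup F] [NormedSpace ℝ F]

def pullbackForm (Γ : U → E) (α : E → E →L[ℝ] F) (q : U) : U →L[ℝ] F :=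
  (α (Γ q)).comp (fderiv ℝ Γ q)

theorem ContDiff.pullbackForm {n : WithTop ℕ∞} {Γ : U → E} {α : E → E →L[ℝ] F}
    (hα : ContDiff ℝ n α) (hΓ : ContDiff ℝ (n + 1) Γ) : ContDiff ℝ n (pullbackForm Γ α) :=
  (hα.comp (hΓ.of_le le_self_add)).clm_comp (hΓ.fderiv_right le_rfl)

theorem fderiv_pullbackForm_apply {Γ : U → E} {α : E → E →L[ℝ] F} {p : U}
    (hα : DifferentiableAt ℝ α (Γ p)) (hΓ : DifferentiableAt ℝ Γ p)
    (hDΓ : DifferentiableAt ℝ (fderiv ℝ Γ) p) (v w : U) :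
    fderiv ℝ (pullbackForm Γ α) p v w =
      fderiv ℝ α (Γ p) (fderiv ℝ Γ p v) (fderiv ℝ Γ p w)
        + α (Γ p) (fderiv ℝ (fderiv ℝ Γ) p v w) := by
  have h : HasFDerivAt (pullbackForm Γ α) _ p :=
    (hα.hasFDerivAt.comp p hΓ.hasFDerivAt).clm_comp hDΓ.hasFDerivAt
  rw [h.fderiv]
  simp [add_comm]

theorem fderiv_pullbackForm_apply_sub_swap {Γ : U → E} {α : E → E →L[ℝ] F} {p : U}
    (hα : DifferentiableAt ℝ α (Γ p)) (hΓ : ContDiffAt ℝ 2 Γ p) (v w : U) :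
    fderiv ℝ (pullbackForm Γ α) p v w - fderiv ℝ (pullbackForm Γ α) p w v =
      fderiv ℝ α (Γ p) (fderiv ℝ Γ p v) (fderiv ℝ Γ p w)
        - fderiv ℝ α (Γ p) (fderiv ℝ Γ p w) (fderiv ℝ Γ p v) := by
  have hΓd : DifferentiableAt ℝ Γ p := hΓ.differentiableAt two_ne_zero
  have hDΓ : DifferentiableAt ℝ (fderiv ℝ Γ) p :=
    (hΓ.fderiv_right (m := 1) le_rfl).differentiableAt one_ne_zero
  rw [fderiv_pullbackForm_apply hα hΓd hDΓ, fderiv_pullbackForm_apply hα hΓd hDΓ,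
    hΓ.isSymmSndFDerivAt (by simp) v w]
  abel

end Pullback

theorem first_variation_of_action_general {N : ℕ}
    (α : (Fin N → ℝ) → ((Fin N → ℝ) →L[ℝ] ℝ)) (hα : ContDiff ℝ ∞ α)
    (Γ : ℝ × ℝ → (Fin N → ℝ)) (hΓ : ContDiff ℝ ∞ Γ)
    (a b : ℝ) :
    HasDerivAt
      (fun s => ∫ t in a..b, α (Γ (t, s)) (deriv (fun u => Γ (u, s)) t))
      ((∫ t in a..b,
          extDerivV α (Γ (t, 0)) (deriv (fun s => Γ (t, s)) 0) (deriv (fun u => Γ (u, 0)) t))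
        + α (Γ (b, 0)) (deriv (fun s => Γ (b, s)) 0)
        - α (Γ (a, 0)) (deriv (fun s => Γ (a, s)) 0))
      0 := by
  have hΓ₂ : ContDiff ℝ 2 Γ := hΓ.of_le (by norm_cast)
  have hpartial_fst : ∀ t s, deriv (fun u => Γ (u, s)) t = fderiv ℝ Γ (t, s) (1, 0) := fun t s =>
    ((hΓ₂.differentiable two_ne_zero) (t, s)).hasFDerivAt.hasDerivAt_partial_fst.deriv
  have hpartial_snd : ∀ t s, deriv (fun u => Γ (t, u)) s = fderiv ℝ Γ (t, s) (0, 1) := fun t s =>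
    ((hΓ₂.differentiable two_ne_zero) (t, s)).hasFDerivAt.hasDerivAt_partial_snd.deriv
  have hdα : ∀ t, extDerivV α (Γ (t, 0)) (fderiv ℝ Γ (t, 0) (0, 1)) (fderiv ℝ Γ (t, 0) (1, 0)) =
      fderiv ℝ (pullbackForm Γ α) (t, 0) (0, 1) (1, 0)
        - fderiv ℝ (pullbackForm Γ α) (t, 0) (1, 0) (0, 1) := fun t =>
    (fderiv_pullbackForm_apply_sub_swap ((hα.differentiable (by norm_cast)) _)
      hΓ₂.contDiffAt _ _).symm
  simp only [hpartial_fst, hpartial_snd, hdα]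
  exact hasDerivAt_intervalIntegral_form_apply_fst
    ((hα.of_le (by norm_cast)).pullbackForm hΓ₂) a b 0

/-- first variation formula: for a smooth 1-form `α` on `ℝ^N` and a
smooth variation `Γ(t,s)` with `γ = Γ(·,0)` and `δγ(t) = ∂Γ/∂s(t,0)`,
`d/ds|₀ ∫_a^b α(γ_s)(γ̇_s) dt
  = ∫_a^b dα(γ)(δγ, γ̇) dt + α(γ(b))(δγ(b)) − α(γ(a))(δγ(a))`. -/
theorem first_variation_of_action {N : ℕ} (hN : 1 ≤ N)
    (α : (Fin N → ℝ) → ((Fin N → ℝ) →L[ℝ] ℝ)) (hα : ContDiff ℝ ∞ α)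
    (Γ : ℝ × ℝ → (Fin N → ℝ)) (hΓ : ContDiff ℝ ∞ Γ)
    (a b ε : ℝ) (hab : a < b) (hε : 0 < ε) :
    HasDerivAt
      (fun s => ∫ t in a..b, α (Γ (t, s)) (deriv (fun u => Γ (u, s)) t))
      ((∫ t in a..b,
          extDerivV α (Γ (t, 0)) (deriv (fun s => Γ (t, s)) 0) (deriv (fun u => Γ (u, 0)) t))
        + α (Γ (b, 0)) (deriv (fun s => Γ (b, s)) 0)
        - α (Γ (a, 0)) (deriv (fun s => Γ (a, s)) 0))
      0 :=
  first_variation_of_action_general α hα Γ hΓ a b
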